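/- Let S be a unital epsilon-strongly G-graded ring and r a minimal nonzero element of the boolean semigroup generated by {ε_g : g ∈ G}. If r is central in S, then N(r) := {g ∈ G : r ε_g = r} is a subgroup of G. -/

import Mathlib

open Pointwise

section Defs

variable {G : Type} [AddGroup G] [DecidableEq G]
variable {A : Type} [Ring A]
variable {M : Type} [AddCommGroup M] [Module A M]

/-- The additive subgroup of `M` consisting of finite sums of products `a • m`
with `a ∈ S` and `m ∈ N`. -/
def prodSMul (S : AddSubgroup A) (N : AddSubgroup M) : AddSubgroup M where
  __ := S.toAddSubmonoid • N.toAddSubmonoid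
  neg_mem' {x} hx := by
    refine AddSubmonoid.smul_induction_on hx (fun a ha m hm => ?_) (fun x y hx hy => ?_)
    · rw [show -(a • m) = (-a) • m by rw [neg_smul]]
      exact AddSubmonoid.smul_mem_smul (S.neg_mem ha) hm
    · rw [neg_add]
      exact (S.toAddSubmonoid • N.toAddSubmonoid).add_mem hx hy

/-- A (possibly non-unital) ring, here an additive subgroup of `A` closed under
multiplication, is *s-unital* if every element has a left and a right local unit in it. -/
def IsSUnitalSub (I : AddSubgroup A) : Prop :=
  ∀ a ∈ I, ∃ u ∈ I, ∃ v ∈ I, u * a = a ∧ a * v = a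

variable (𝒜 : G → AddSubgroup A)

/-- `S` is symmetrically graded if `S_g S_{g⁻¹} S_g = S_g` for all `g`. -/
def IsSymmetricallyGraded : Prop := ∀ g : G, 𝒜 g * 𝒜 (-g) * 𝒜 g = 𝒜 g

/-- `S` is nearly epsilon-strongly graded if each `S_g` is an s-unital
`(S_g S_{g⁻¹}, S_{g⁻¹} S_g)`-bimodule: for every `s ∈ S_g` there are
`u ∈ S_g S_{g⁻¹}` and `v ∈ S_{g⁻¹} S_g` with `u s = s = s v`. -/
def IsNearlyEpsilonStrong : Prop :=
  ∀ g : G, ∀ s ∈ 𝒜 g, ∃ u ∈ 𝒜 g * 𝒜 (-g), ∃ v ∈ 𝒜 (-g) * 𝒜 g, u * s = s ∧ s * v = s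

end Defs

/-!
The ε's are commuting idempotents of `S_0` (`ε_g` is the identity of the ideal `S_g S_{g⁻¹}` of
`S_0`), so `r` is idempotent and minimality forces `r ε_g ∈ {r, 0}`. As `ε_g` is a left identity
on `S_g`, `r ε_g = 0` iff `r S_g = 0`. For `g, h ∈ N(r)` and `s ∈ S_g`, centrality of `r` gives
`r s = s r ε_{g⁻¹} ∈ S_g r S_{g⁻¹}` and `r s = s r ε_h = r s ε_h ∈ r S_{gh} S_{h⁻¹}`; so
`r S_{g⁻¹} = 0` or `r S_{gh} = 0` would give `r S_g = 0`, i.e. `r = r ε_g = 0`.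
-/

@[elab_as_elim]
theorem AddSubgroup.mul_induction_on {R : Type*} [NonUnitalNonAssocRing R] {M N : AddSubgroup R}
    {p : R → Prop} {x : R} (hx : x ∈ M * N) (mul : ∀ m ∈ M, ∀ n ∈ N, p (m * n))
    (add : ∀ x y, p x → p y → p (x + y)) : p x :=
  AddSubmonoid.mul_induction_on hx mul add

theorem AddSubgroup.mul_mem_mul {R : Type*} [NonUnitalNonAssocRing R] {M N : AddSubgroup R}
    {m n : R} (hm : m ∈ M) (hn : n ∈ N) : m * n ∈ M * N :=
  AddSubmonoid.mul_mem_mul hm hn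

theorem Subsemigroup.isIdempotentElem_of_mem_closure {M : Type*} [Semigroup M] {s : Set M}
    (hcomm : ∀ a ∈ s, ∀ b ∈ s, Commute a b) (hidem : ∀ a ∈ s, IsIdempotentElem a) {x : M}
    (hx : x ∈ closure s) : IsIdempotentElem x := by
  have hle := closure_le_centralizer_centralizer s
  induction hx using closure_induction with
  | mem a ha => exact hidem a ha
  | mul x y hx hy ihx ihy =>
    exact ihx.mul_of_commute
      (Set.centralizer_centralizer_comm_of_comm hcomm x (hle hx) y (hle hy)) ihy

theorem mul_eq_self_or_eq_zero_of_minimal {M : Type*} [SemigroupWithZero M] {S : Subsemigroup M}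
    {r b : M} (hmin : ∀ a ∈ S, a ≠ 0 → a * r = a → a = r) (hrS : r ∈ S)
    (hr : IsIdempotentElem r) (hrb : Commute r b) (hb : b ∈ S) : r * b = r ∨ r * b = 0 :=
  or_iff_not_imp_right.2 fun hne =>
    hmin _ (S.mul_mem hrS hb) hne (by rw [mul_assoc, ← hrb.eq, ← mul_assoc, hr.eq])

section Graded

variable {G A : Type*} [AddMonoid G] [NonUnitalRing A] {𝒜 : G → AddSubgroup A}
  [SetLike.GradedMul 𝒜]

theorem mem_graded_add_of_mem_mul {g h : G} {x : A} (hx : x ∈ 𝒜 g * 𝒜 h) : x ∈ 𝒜 (g + h) :=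
  AddSubgroup.mul_induction_on hx (fun _ ha _ hb => SetLike.mul_mem_graded ha hb)
    (fun _ _ => add_mem)

theorem mul_mem_mul_of_mem_zero_left {g h : G} {s x : A} (hs : s ∈ 𝒜 0)
    (hx : x ∈ 𝒜 g * 𝒜 h) : s * x ∈ 𝒜 g * 𝒜 h :=
  AddSubgroup.mul_induction_on hx
    (fun a ha b hb => by
      rw [← mul_assoc]
      exact AddSubgroup.mul_mem_mul (by simpa using SetLike.mul_mem_graded hs ha) hb)
    (fun _ _ hx hy => by rw [mul_add]; exact add_mem hx hy)

theorem mul_mem_mul_of_mem_zero_right {g h : G} {s x : A} (hs : s ∈ 𝒜 0)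
    (hx : x ∈ 𝒜 g * 𝒜 h) : x * s ∈ 𝒜 g * 𝒜 h :=
  AddSubgroup.mul_induction_on hx
    (fun a ha b hb => by
      rw [mul_assoc]
      exact AddSubgroup.mul_mem_mul ha (by simpa using SetLike.mul_mem_graded hb hs))
    (fun _ _ hx hy => by rw [add_mul]; exact add_mem hx hy)

end Graded

section EpsilonGraded

variable {G A : Type*} [AddGroup G] [NonUnitalRing A] {𝒜 : G → AddSubgroup A} {ε : G → A}

theorem eps_mul_of_mem_mul (hunit : ∀ g, ∀ s ∈ 𝒜 g, ε g * s = s ∧ s * ε (-g) = s) {g h : G}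
    {x : A} (hx : x ∈ 𝒜 g * 𝒜 h) : ε g * x = x :=
  AddSubgroup.mul_induction_on hx (fun a ha b _ => by rw [← mul_assoc, (hunit g a ha).1])
    (fun _ _ hx hy => by rw [mul_add, hx, hy])

theorem mul_eps_of_mem_mul (hunit : ∀ g, ∀ s ∈ 𝒜 g, ε g * s = s ∧ s * ε (-g) = s) {g h : G}
    {x : A} (hx : x ∈ 𝒜 h * 𝒜 (-g)) : x * ε g = x :=
  AddSubgroup.mul_induction_on hx
    (fun a _ b hb => by rw [mul_assoc, ← neg_neg g, (hunit (-g) b hb).2])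
    (fun _ _ hx hy => by rw [add_mul, hx, hy])

theorem mul_eps_eq_zero_iff (hmem : ∀ g, ε g ∈ 𝒜 g * 𝒜 (-g))
    (hunit : ∀ g, ∀ s ∈ 𝒜 g, ε g * s = s ∧ s * ε (-g) = s) {g : G} {y : A} :
    y * ε g = 0 ↔ ∀ s ∈ 𝒜 g, y * s = 0 := by
  refine ⟨fun h s hs => ?_, fun h => ?_⟩
  · rw [← (hunit g s hs).1, ← mul_assoc, h, zero_mul]
  · exact AddSubgroup.mul_induction_on (hmem g)
      (fun a ha b _ => by rw [← mul_assoc, h a ha, zero_mul])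
      (fun _ _ hx hy => by rw [mul_add, hx, hy, add_zero])

theorem mul_eps_zero_eq_self (hunit : ∀ g, ∀ s ∈ 𝒜 g, ε g * s = s ∧ s * ε (-g) = s) {r : A}
    (hr : r ∈ 𝒜 0) : r * ε 0 = r := by
  simpa using (hunit 0 r hr).2

theorem mul_eps_neg_ne_zero (hmem : ∀ g, ε g ∈ 𝒜 g * 𝒜 (-g))
    (hunit : ∀ g, ∀ s ∈ 𝒜 g, ε g * s = s ∧ s * ε (-g) = s) {r : A} (hr : ∀ x, Commute r x)
    (hr0 : r ≠ 0) {g : G} (hg : r * ε g = r) : r * ε (-g) ≠ 0 := by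
  intro h0
  apply hr0
  rw [← hg, mul_eps_eq_zero_iff hmem hunit]
  intro s hs
  calc r * s = r * (s * ε (-g)) := by rw [(hunit g s hs).2]
    _ = s * (r * ε (-g)) := by rw [← mul_assoc, (hr s).eq, mul_assoc]
    _ = 0 := by rw [h0, mul_zero]

variable [SetLike.GradedMul 𝒜]

theorem eps_mem_zero (hmem : ∀ g, ε g ∈ 𝒜 g * 𝒜 (-g)) (g : G) : ε g ∈ 𝒜 0 := by
  simpa using mem_graded_add_of_mem_mul (hmem g)

theorem commute_eps_of_mem_zero (hmem : ∀ g, ε g ∈ 𝒜 g * 𝒜 (-g))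
    (hunit : ∀ g, ∀ s ∈ 𝒜 g, ε g * s = s ∧ s * ε (-g) = s) {g : G} {s : A} (hs : s ∈ 𝒜 0) :
    Commute (ε g) s :=
  calc ε g * s = ε g * s * ε g :=
        (mul_eps_of_mem_mul hunit (mul_mem_mul_of_mem_zero_right hs (hmem g))).symm
    _ = ε g * (s * ε g) := mul_assoc _ _ _
    _ = s * ε g := eps_mul_of_mem_mul hunit (mul_mem_mul_of_mem_zero_left hs (hmem g))

theorem mem_zero_of_mem_closure (hmem : ∀ g, ε g ∈ 𝒜 g * 𝒜 (-g)) {a : A}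
    (ha : a ∈ Subsemigroup.closure (Set.range ε)) : a ∈ 𝒜 0 := by
  induction ha using Subsemigroup.closure_induction with
  | mem _ hx => obtain ⟨g, rfl⟩ := hx; exact eps_mem_zero hmem g
  | mul _ _ _ _ hx hy => simpa using SetLike.mul_mem_graded hx hy

theorem isIdempotentElem_of_mem_closure (hmem : ∀ g, ε g ∈ 𝒜 g * 𝒜 (-g))
    (hunit : ∀ g, ∀ s ∈ 𝒜 g, ε g * s = s ∧ s * ε (-g) = s) {a : A}
    (ha : a ∈ Subsemigroup.closure (Set.range ε)) : IsIdempotentElem a :=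
  Subsemigroup.isIdempotentElem_of_mem_closure
    (by
      rintro _ ⟨g, rfl⟩ _ ⟨h, rfl⟩
      exact commute_eps_of_mem_zero hmem hunit (eps_mem_zero hmem h))
    (by rintro _ ⟨g, rfl⟩; exact eps_mul_of_mem_mul hunit (hmem g)) ha

theorem mul_eps_add_ne_zero (hmem : ∀ g, ε g ∈ 𝒜 g * 𝒜 (-g))
    (hunit : ∀ g, ∀ s ∈ 𝒜 g, ε g * s = s ∧ s * ε (-g) = s) {r : A} (hr : ∀ x, Commute r x)
    (hr0 : r ≠ 0) {g h : G} (hg : r * ε g = r) (hh : r * ε h = r) : r * ε (g + h) ≠ 0 := by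
  intro h0
  apply hr0
  rw [← hg, mul_eps_eq_zero_iff hmem hunit]
  intro s hs
  calc r * s = s * (r * ε h) := by rw [hh, (hr s).eq]
    _ = r * s * ε h := by rw [← mul_assoc, (hr s).eq]
    _ = 0 := (mul_eps_eq_zero_iff hmem hunit).2 fun t ht => by
      rw [mul_assoc]
      exact (mul_eps_eq_zero_iff hmem hunit).1 h0 _ (SetLike.mul_mem_graded hs ht)

end EpsilonGraded

/-- If `r` is a minimal nonzero element of the boolean semigroup
generated by the `ε_g`'s which is central in `S`, then `N(r) = {g : r ε_g = r}` is
a subgroup of `G`. -/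
theorem N_is_subgroup_of_central
    {G : Type} [AddGroup G] [DecidableEq G]
    {A : Type} [Ring A] (𝒜 : G → AddSubgroup A) [GradedRing 𝒜]
    (ε : G → A)
    (hmem : ∀ g : G, ε g ∈ 𝒜 g * 𝒜 (-g))
    (hunit : ∀ g : G, ∀ s ∈ 𝒜 g, ε g * s = s ∧ s * ε (-g) = s)
    (r : A)
    (hrB : r ∈ Subsemigroup.closure (Set.range ε))
    (hr0 : r ≠ 0)
    (hmin : ∀ a ∈ Subsemigroup.closure (Set.range ε), a ≠ 0 → a * r = a → a = r)
    (hrZ : ∀ x : A, r * x = x * r) :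
    ∃ H : AddSubgroup G, ∀ g : G, g ∈ H ↔ r * ε g = r := by
  have hidem : IsIdempotentElem r := isIdempotentElem_of_mem_closure hmem hunit hrB
  have hdich : ∀ g, r * ε g ≠ 0 → r * ε g = r := fun g hg =>
    (mul_eq_self_or_eq_zero_of_minimal hmin hrB hidem (hrZ (ε g))
      (Subsemigroup.subset_closure ⟨g, rfl⟩)).resolve_right hg
  exact ⟨{ carrier := {g | r * ε g = r}
           zero_mem' := mul_eps_zero_eq_self hunit (mem_zero_of_mem_closure hmem hrB)
           add_mem' := fun hg hh => hdich _ (mul_eps_add_ne_zero hmem hunit hrZ hr0 hg hh)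
           neg_mem' := fun hg => hdich _ (mul_eps_neg_ne_zero hmem hunit hrZ hr0 hg) },
    fun _ => Iff.rfl⟩
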